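/- arXiv:1907.13294 — 9 statements merged into one kernel-verified Lean document; each statement's English description precedes it below -/
import Mathlib

section
/- (Necessity of greedy structure) If x ∈ F maximizes ∑ w_t x_t over F, then for every pair of indices i, j with w_i > w_j, either x_i = u_i or x_j = l_j. -/
/-- Necessity of the greedy structure: an optimal x satisfies
w i > w j → x i = u i ∨ x j = l j. -/
theorem greedy_structure_necessary (n : ℕ) (w l u x : Fin n → ℝ)
    (hlu : ∀ i, l i ≤ u i)
    (hx : ∀ i, l i ≤ x i ∧ x i ≤ u i) (hsum : ∑ i, x i = 0)
    (hopt : ∀ y : Fin n → ℝ, (∀ i, l i ≤ y i ∧ y i ≤ u i) → (∑ i, y i = 0) →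
      ∑ t, w t * y t ≤ ∑ t, w t * x t) :
    ∀ i j, w i > w j → x i = u i ∨ x j = l j := by
  intro i j hw
  by_contra h
  push_neg at h
  obtain ⟨hi, hj⟩ := h
  have hij : i ≠ j := by rintro rfl; exact absurd rfl (ne_of_gt hw)
  have hi' : x i < u i := lt_of_le_of_ne (hx i).2 hi
  have hj' : l j < x j := lt_of_le_of_ne (hx j).1 (Ne.symm hj)
  set ε := min (u i - x i) (x j - l j) with hε
  have hεpos : 0 < ε := lt_min (by linarith) (by linarith)
  set y : Fin n → ℝ := fun t => x t + (if t = i then ε else 0) - (if t = j then ε else 0)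
    with hy
  have hbound : ∀ t, l t ≤ y t ∧ y t ≤ u t := by
    intro t
    simp only [hy]
    by_cases ht : t = i
    · subst ht
      have : ε ≤ u t - x t := min_le_left _ _
      simp [hij, (hx t).1]
      constructor
      · linarith [(hx t).1]
      · linarith
    · by_cases ht' : t = j
      · subst ht'
        have : ε ≤ x t - l t := min_le_right _ _
        simp [ht]
        constructor
        · linarith
        · linarith [(hx t).2]
      · simp [ht, ht']
        exact hx t
  have hsum' : ∑ t, y t = 0 := by
    simp only [hy]
    rw [Finset.sum_sub_distrib, Finset.sum_add_distrib]
    simp [hsum]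
  have := hopt y hbound hsum'
  have hobj : ∑ t, w t * y t = ∑ t, w t * x t + ε * (w i - w j) := by
    simp only [hy, mul_sub, mul_add, mul_ite, mul_zero]
    rw [Finset.sum_sub_distrib, Finset.sum_add_distrib]
    simp [Finset.sum_ite_eq', mul_sub]
    ring
  rw [hobj] at this
  nlinarith
end

section
/- (Sufficiency of greedy structure) Suppose x ∈ F satisfies: for every pair i, j with w_i > w_j, either x_i = u_i or x_j = l_j. Then x maximizes ∑ w_t x_t over F; that is, for every y ∈ F, ∑ w_t y_t ≤ ∑ w_t x_t. -/
/-- Sufficiency of the greedy structure: a feasible x satisfying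
(w i > w j → x i = u i ∨ x j = l j) maximizes the objective over F. -/
theorem greedy_structure_sufficient (n : ℕ) (w l u x : Fin n → ℝ)
    (hlu : ∀ i, l i ≤ u i)
    (hx : ∀ i, l i ≤ x i ∧ x i ≤ u i) (hsum : ∑ i, x i = 0)
    (hgreedy : ∀ i j, w i > w j → x i = u i ∨ x j = l j) :
    ∀ y : Fin n → ℝ, (∀ i, l i ≤ y i ∧ y i ≤ u i) → (∑ i, y i = 0) →
      ∑ t, w t * y t ≤ ∑ t, w t * x t := by
  intro y hy hysum
  set d : Fin n → ℝ := fun t => y t - x t with hd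
  have key : ∀ i j, 0 < d i → d j < 0 → w i ≤ w j := by
    intro i j hi hj
    by_contra h
    push_neg at h
    rcases hgreedy i j h with h1 | h2
    · have := (hy i).2
      simp only [hd] at hi
      linarith [h1 ▸ this]
    · have := (hy j).1
      simp only [hd] at hj
      linarith [h2 ▸ this]
  have hdsum : ∑ t, d t = 0 := by
    simp [hd, Finset.sum_sub_distrib, hsum, hysum]
  have main : ∑ t, w t * d t ≤ 0 := by
    rcases (Finset.univ.filter (fun i => 0 < d i)).eq_empty_or_nonempty with hP | hP
    · have hnonpos : ∀ t ∈ Finset.univ, d t ≤ 0 := by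
        intro t _
        by_contra ht
        push_neg at ht
        have : t ∈ Finset.univ.filter (fun i => 0 < d i) := by simp [ht]
        simp [hP] at this
      have hall : ∀ t ∈ Finset.univ, d t = 0 :=
        (Finset.sum_eq_zero_iff_of_nonpos hnonpos).1 hdsum
      have : ∑ t, w t * d t = 0 := by
        apply Finset.sum_eq_zero
        intro t ht
        rw [hall t ht, mul_zero]
      linarith
    · obtain ⟨i0, hi0, hmax⟩ := Finset.exists_max_image _ w hP
      have hi0' : 0 < d i0 := (Finset.mem_filter.1 hi0).2
      have pointwise : ∀ t, w t * d t ≤ w i0 * d t := by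
        intro t
        rcases lt_trichotomy (d t) 0 with hlt | heq | hgt
        · have : w i0 ≤ w t := key i0 t hi0' hlt
          nlinarith
        · simp [heq]
        · have : w t ≤ w i0 := hmax t (by simp [hgt])
          nlinarith
      calc ∑ t, w t * d t ≤ ∑ t, w i0 * d t := Finset.sum_le_sum (fun t _ => pointwise t)
        _ = w i0 * ∑ t, d t := by rw [Finset.mul_sum]
        _ = 0 := by rw [hdsum, mul_zero]
  have expand : ∑ t, w t * y t - ∑ t, w t * x t = ∑ t, w t * d t := by
    rw [← Finset.sum_sub_distrib]
    apply Finset.sum_congr rfl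
    intro t _
    simp [hd, mul_sub]
  linarith
end

section
/- (Optimality characterization) A point x ∈ F is optimal for maximizing ∑ w_t x_t over F if and only if for every pair of indices i, j with w_i > w_j, one has x_i = u_i or x_j = l_j. -/
/-- Optimality characterization: x ∈ F is optimal iff for all i, j with w i > w j,
x i = u i or x j = l j. -/
theorem greedy_optimality_characterization (n : ℕ) (w l u x : Fin n → ℝ)
    (hlu : ∀ i, l i ≤ u i)
    (hx : ∀ i, l i ≤ x i ∧ x i ≤ u i) (hsum : ∑ i, x i = 0)
    (hne : ∃ z : Fin n → ℝ, (∀ i, l i ≤ z i ∧ z i ≤ u i) ∧ ∑ i, z i = 0) :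
    (∀ y : Fin n → ℝ, (∀ i, l i ≤ y i ∧ y i ≤ u i) → (∑ i, y i = 0) →
        ∑ t, w t * y t ≤ ∑ t, w t * x t) ↔
      (∀ i j, w i > w j → x i = u i ∨ x j = l j) := by
  constructor
  · intro hopt i j hw
    by_contra hcon
    push_neg at hcon
    obtain ⟨hxu, hxl⟩ := hcon
    have hi : x i < u i := lt_of_le_of_ne (hx i).2 hxu
    have hj : l j < x j := lt_of_le_of_ne (hx j).1 (Ne.symm hxl)
    have hij : i ≠ j := by rintro rfl; exact lt_irrefl _ hw
    set ε := min (u i - x i) (x j - l j) with hεdef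
    have hε0 : 0 < ε := lt_min (by linarith) (by linarith)
    have hε1 : ε ≤ u i - x i := min_le_left _ _
    have hε2 : ε ≤ x j - l j := min_le_right _ _
    set y : Fin n → ℝ :=
      fun t => x t + (if t = i then ε else 0) - (if t = j then ε else 0) with hy
    have hfeas : ∀ t, l t ≤ y t ∧ y t ≤ u t := by
      intro t
      rcases eq_or_ne t i with rfl | hti
      · simp [hy, if_neg hij]
        constructor
        · linarith [(hx t).1]
        · linarith
      · rcases eq_or_ne t j with rfl | htj
        · simp [hy, if_neg hti]
          constructor
          · linarith
          · linarith [(hx t).2]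
        · simp [hy, if_neg hti, if_neg htj]
          exact hx t
    have hsumy : ∑ t, y t = 0 := by
      simp only [hy, Finset.sum_sub_distrib, Finset.sum_add_distrib,
        Finset.sum_ite_eq', Finset.mem_univ, if_true, hsum]
      ring
    have hval : ∑ t, w t * y t = ∑ t, w t * x t + ε * (w i - w j) := by
      have : ∀ t, w t * y t = w t * x t + (if t = i then w t * ε else 0)
          - (if t = j then w t * ε else 0) := by
        intro t
        simp only [hy, mul_sub, mul_add, mul_ite, mul_zero]
      simp only [this, Finset.sum_sub_distrib, Finset.sum_add_distrib,
        Finset.sum_ite_eq', Finset.mem_univ, if_true]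
      ring
    have := hopt y hfeas hsumy
    rw [hval] at this
    nlinarith
  · intro hcond y hyf hysum
    set d : Fin n → ℝ := fun t => y t - x t with hd
    have hdsum : ∑ t, d t = 0 := by
      simp [hd, Finset.sum_sub_distrib, hysum, hsum]
    have key : ∀ t s, 0 < d t → d s < 0 → w t ≤ w s := by
      intro t s ht hs
      by_contra hws
      push_neg at hws
      rcases hcond t s hws with h | h
      · have : y t ≤ u t := (hyf t).2
        have : x t < y t := by simp [hd] at ht; linarith
        linarith [h ▸ (hyf t).2]
      · have : l s ≤ y s := (hyf s).1
        have : y s < x s := by simp [hd] at hs; linarith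
        linarith [h ▸ (hyf s).1]
    suffices hkey : ∑ t, w t * d t ≤ 0 by
      have : ∑ t, w t * y t = ∑ t, w t * x t + ∑ t, w t * d t := by
        rw [← Finset.sum_add_distrib]
        apply Finset.sum_congr rfl
        intro t _
        simp [hd]; ring
      linarith
    set P := Finset.univ.filter (fun t => 0 < d t) with hP
    rcases P.eq_empty_or_nonempty with hPe | hPne
    · -- all d t ≤ 0 and sum zero forces d = 0
      have hdle : ∀ t, d t ≤ 0 := by
        intro t
        by_contra h
        push_neg at h
        have : t ∈ P := by simp [hP, h]
        simp [hPe] at this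
      have hdz : ∀ t ∈ Finset.univ, d t = 0 := by
        have := (Finset.sum_eq_zero_iff_of_nonneg
          (f := fun t => -d t) (s := Finset.univ)
          (fun t _ => by simpa using hdle t)).1 (by simp [hdsum])
        intro t _
        have := this t (Finset.mem_univ t)
        linarith
      calc ∑ t, w t * d t = 0 := by
            apply Finset.sum_eq_zero
            intro t ht
            rw [hdz t ht, mul_zero]
        _ ≤ 0 := le_refl 0
    · set c := P.sup' hPne w with hc
      have hterm : ∀ t, (w t - c) * d t ≤ 0 := by
        intro t
        rcases lt_trichotomy (d t) 0 with h | h | h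
        · have hcle : c ≤ w t := by
            apply Finset.sup'_le
            intro s hs
            have : 0 < d s := (Finset.mem_filter.1 hs).2
            exact key s t this h
          nlinarith
        · rw [h, mul_zero]
        · have : t ∈ P := by simp [hP, h]
          have hwle : w t ≤ c := Finset.le_sup' w this
          nlinarith
      have : ∑ t, (w t - c) * d t ≤ 0 :=
        Finset.sum_nonpos (fun t _ => hterm t)
      have hexp : ∑ t, (w t - c) * d t = ∑ t, w t * d t - c * ∑ t, d t := by
        rw [Finset.mul_sum, ← Finset.sum_sub_distrib]
        apply Finset.sum_congr rfl
        intro t _; ring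
      rw [hexp, hdsum, mul_zero, sub_zero] at this
      exact this
end

section
/- (Disagreement-reducing exchange) Let x ∈ F satisfy the greedy condition (for all i, j: w_i > w_j implies x_i = u_i or x_j = l_j), and let y ∈ F be optimal with y ≠ x. Let a, b be indices with y_a > x_a and y_b < x_b, and set δ = min(y_a − x_a, x_b − y_b) > 0. Define y' by y'_a = y_a − δ, y'_b = y_b + δ, and y'_t = y_t otherwise. Then y' ∈ F, ∑ w_t y'_t ≥ ∑ w_t y_t, and the number of indices where y' differs from x is strictly less than the number where y differs from x. -/
/-- Disagreement-reducing exchange: from an optimal y ≠ x (x greedy), the exchange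
at a, b keeps feasibility, does not decrease the objective, and strictly reduces
the number of disagreements with x. -/
theorem disagreement_reducing_exchange (n : ℕ) (w l u x y : Fin n → ℝ)
    (hlu : ∀ i, l i ≤ u i)
    (hx : ∀ i, l i ≤ x i ∧ x i ≤ u i) (hxsum : ∑ i, x i = 0)
    (hgreedy : ∀ i j, w i > w j → x i = u i ∨ x j = l j)
    (hy : ∀ i, l i ≤ y i ∧ y i ≤ u i) (hysum : ∑ i, y i = 0)
    (hyopt : ∀ z : Fin n → ℝ, (∀ i, l i ≤ z i ∧ z i ≤ u i) → (∑ i, z i = 0) →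
      ∑ t, w t * z t ≤ ∑ t, w t * y t)
    (hyx : y ≠ x)
    (a b : Fin n) (hab : y a > x a) (hbb : y b < x b)
    (δ : ℝ) (hδ : δ = min (y a - x a) (x b - y b))
    (y' : Fin n → ℝ)
    (hy' : y' = fun t => if t = a then y a - δ else if t = b then y b + δ else y t) :
    (∀ i, l i ≤ y' i ∧ y' i ≤ u i) ∧ (∑ i, y' i = 0) ∧
      (∑ t, w t * y t ≤ ∑ t, w t * y' t) ∧
      ((Finset.univ.filter fun t => y' t ≠ x t).card <
        (Finset.univ.filter fun t => y t ≠ x t).card) := by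
  have hab' : a ≠ b := by
    rintro rfl; linarith
  have hδ1 : δ ≤ y a - x a := hδ ▸ min_le_left _ _
  have hδ2 : δ ≤ x b - y b := hδ ▸ min_le_right _ _
  have hδpos : 0 < δ := by
    rw [hδ]; exact lt_min (by linarith) (by linarith)
  have hwab : w a ≤ w b := by
    by_contra h
    push_neg at h
    rcases hgreedy a b h with h' | h'
    · have := (hy a).2; linarith
    · have := (hy b).1; linarith
  have hdecomp : ∀ i, y' i = y i + (if i = a then -δ else 0) + (if i = b then δ else 0) := by
    intro i
    rw [hy']
    by_cases hia : i = a
    · rw [hia]; simp [hab']; ring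
    · by_cases hib : i = b
      · rw [hib]; simp [Ne.symm hab']
      · simp [hia, hib]
  have hwdecomp : ∀ i, w i * y' i
      = w i * y i + (if i = a then -(w a * δ) else 0) + (if i = b then w b * δ else 0) := by
    intro i
    rw [hy']
    by_cases hia : i = a
    · rw [hia]; simp [hab']; ring
    · by_cases hib : i = b
      · rw [hib]; simp [Ne.symm hab']; ring
      · simp [hia, hib]
  refine ⟨?_, ?_, ?_, ?_⟩
  · intro i
    rw [hy']
    by_cases hia : i = a
    · rw [hia]; simp [hab']
      constructor
      · have := (hx a).1; linarith
      · have := (hy a).2; linarith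
    · by_cases hib : i = b
      · rw [hib]; simp [Ne.symm hab']
        constructor
        · have := (hy b).1; linarith
        · have := (hx b).2; linarith
      · simp [hia, hib]; exact hy i
  · calc ∑ i, y' i = ∑ i, (y i + (if i = a then -δ else 0) + (if i = b then δ else 0)) := by
          exact Finset.sum_congr rfl fun i _ => hdecomp i
      _ = (∑ i, y i) + (-δ) + δ := by
          rw [Finset.sum_add_distrib, Finset.sum_add_distrib,
            Finset.sum_ite_eq' Finset.univ a fun _ => -δ,
            Finset.sum_ite_eq' Finset.univ b fun _ => δ]
          simp
      _ = 0 := by rw [hysum]; ring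
  · have : ∑ t, w t * y' t = (∑ t, w t * y t) + (-(w a * δ)) + w b * δ := by
      calc ∑ t, w t * y' t
          = ∑ t, (w t * y t + (if t = a then -(w a * δ) else 0)
              + (if t = b then w b * δ else 0)) :=
            Finset.sum_congr rfl fun i _ => hwdecomp i
        _ = _ := by
            rw [Finset.sum_add_distrib, Finset.sum_add_distrib,
              Finset.sum_ite_eq' Finset.univ a fun _ => -(w a * δ),
              Finset.sum_ite_eq' Finset.univ b fun _ => w b * δ]
            simp
    rw [this]
    nlinarith
  · apply Finset.card_lt_card
    constructor
    · intro t ht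
      simp only [Finset.mem_filter, Finset.mem_univ, true_and] at ht ⊢
      by_cases hta : t = a
      · subst hta; exact ne_of_gt hab
      · by_cases htb : t = b
        · subst htb; exact ne_of_lt hbb
        · rw [hy'] at ht; simpa [hta, htb] using ht
    · rcases le_total (y a - x a) (x b - y b) with hmin | hmin
      · have hda : δ = y a - x a := by rw [hδ, min_eq_left hmin]
        intro hsub
        have ha : a ∈ Finset.univ.filter fun t => y t ≠ x t := by
          simp [ne_of_gt hab]
        have := hsub ha
        simp only [Finset.mem_filter, Finset.mem_univ, true_and] at this
        apply this
        rw [hy']; simp [hda]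
      · have hdb : δ = x b - y b := by rw [hδ, min_eq_right hmin]
        intro hsub
        have hb : b ∈ Finset.univ.filter fun t => y t ≠ x t := by
          simp [ne_of_lt hbb]
        have := hsub hb
        simp only [Finset.mem_filter, Finset.mem_univ, true_and] at this
        apply this
        rw [hy']; simp [Ne.symm hab', hdb]
end

section
/- In the exchange of the previous setup, if w_a < w_b then ∑ w_t y'_t > ∑ w_t y_t, contradicting optimality of y; hence under the greedy condition on x and optimality of y, necessarily w_a = w_b for any such exchange pair (a, b). -/
/-- Under the greedy condition on x and optimality of y, any exchange pair a, b
(with y a > x a and y b < x b) must satisfy w a = w b. -/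
theorem exchange_pair_weights_eq (n : ℕ) (w l u x y : Fin n → ℝ)
    (hlu : ∀ i, l i ≤ u i)
    (hx : ∀ i, l i ≤ x i ∧ x i ≤ u i) (hxsum : ∑ i, x i = 0)
    (hgreedy : ∀ i j, w i > w j → x i = u i ∨ x j = l j)
    (hy : ∀ i, l i ≤ y i ∧ y i ≤ u i) (hysum : ∑ i, y i = 0)
    (hyopt : ∀ z : Fin n → ℝ, (∀ i, l i ≤ z i ∧ z i ≤ u i) → (∑ i, z i = 0) →
      ∑ t, w t * z t ≤ ∑ t, w t * y t)
    (a b : Fin n) (hab : y a > x a) (hbb : y b < x b) :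
    w a = w b := by
  have hane : a ≠ b := by
    intro h; rw [h] at hab; linarith
  rcases lt_trichotomy (w a) (w b) with hlt | heq | hgt
  · -- exchange improves y, contradicting optimality
    exfalso
    set δ : ℝ := min (y a - x a) (x b - y b) with hδ
    have hδpos : 0 < δ := lt_min (by linarith) (by linarith)
    have hδa : δ ≤ y a - x a := min_le_left _ _
    have hδb : δ ≤ x b - y b := min_le_right _ _
    set z : Fin n → ℝ := fun i => if i = a then y a - δ else if i = b then y b + δ else y i
      with hz
    have hza : z a = y a - δ := by simp [hz]
    have hzb : z b = y b + δ := by simp [hz, Ne.symm hane]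
    have hzo : ∀ i, i ≠ a → i ≠ b → z i = y i := by
      intro i hia hib; simp [hz, hia, hib]
    have hdiff : ∀ i, z i - y i = (if i = a then -δ else 0) + (if i = b then δ else 0) := by
      intro i
      by_cases hia : i = a
      · subst hia; rw [hza]; simp [hane]
      · by_cases hib : i = b
        · subst hib; rw [hzb]; simp [hia]
        · rw [hzo i hia hib]; simp [hia, hib]
    have key : ∀ c : Fin n → ℝ, ∑ i, c i * (z i - y i) = c b * δ - c a * δ := by
      intro c
      have h1 : ∀ i ∈ Finset.univ, c i * (z i - y i)
          = (if i = a then c i * (-δ) else 0) + (if i = b then c i * δ else 0) := by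
        intro i _
        rw [hdiff i]
        split_ifs <;> ring
      rw [Finset.sum_congr rfl h1, Finset.sum_add_distrib,
        Finset.sum_ite_eq' Finset.univ a (fun i => c i * (-δ)),
        Finset.sum_ite_eq' Finset.univ b (fun i => c i * δ)]
      simp
      ring
    have key2 : ∀ c : Fin n → ℝ, ∑ i, c i * z i = ∑ i, c i * y i + (c b * δ - c a * δ) := by
      intro c
      have h1 : ∀ i ∈ Finset.univ, c i * z i = c i * y i + c i * (z i - y i) := by
        intro i _; ring
      rw [Finset.sum_congr rfl h1, Finset.sum_add_distrib, key c]
    have hzfeas : ∀ i, l i ≤ z i ∧ z i ≤ u i := by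
      intro i
      by_cases hia : i = a
      · subst hia
        have h1 := hx i; have h2 := hy i
        rw [hza]
        constructor <;> linarith
      · by_cases hib : i = b
        · subst hib
          have h1 := hx i; have h2 := hy i
          rw [hzb]
          constructor <;> linarith
        · rw [hzo i hia hib]; exact hy i
    have hzsum : ∑ i, z i = 0 := by
      have := key2 (fun _ => 1)
      simp only [one_mul] at this
      rw [this, hysum]; ring
    have hle := hyopt z hzfeas hzsum
    rw [key2 w] at hle
    have : 0 < (w b - w a) * δ := mul_pos (by linarith) hδpos
    nlinarith
  · exact heq
  · -- greedy contradicts y a > x a, y b < x b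
    exfalso
    rcases hgreedy a b hgt with h | h
    · have := (hy a).2; linarith
    · have := (hy b).1; linarith
end

section
/- (Greedy existence) If ∑_i l_i ≤ 0 ≤ ∑_i u_i, then F = {x : ∀ i, l_i ≤ x_i ≤ u_i, ∑ x_i = 0} is nonempty, and moreover there exists an optimal x ∈ F maximizing ∑ w_i x_i such that for all but at most one index i, x_i ∈ {l_i, u_i}. -/
open Finset

private noncomputable def interior' {n : ℕ} (l u x : Fin n → ℝ) : Finset (Fin n) :=
  Finset.univ.filter (fun t => l t < x t ∧ x t < u t)

private lemma step_lemma {n : ℕ} (w l u : Fin n → ℝ) (x : Fin n → ℝ)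
    (hx : ∀ t, l t ≤ x t ∧ x t ≤ u t) (hs : ∑ t, x t = 0)
    (hmax : ∀ y : Fin n → ℝ, (∀ t, l t ≤ y t ∧ y t ≤ u t) → (∑ t, y t = 0) →
        ∑ t, w t * y t ≤ ∑ t, w t * x t)
    (i j : Fin n) (hij : i ≠ j)
    (hi : i ∈ interior' l u x) (hj : j ∈ interior' l u x)
    (hw : w j ≤ w i) :
    ∃ x' : Fin n → ℝ, (∀ t, l t ≤ x' t ∧ x' t ≤ u t) ∧ (∑ t, x' t = 0) ∧
      (∀ y : Fin n → ℝ, (∀ t, l t ≤ y t ∧ y t ≤ u t) → (∑ t, y t = 0) →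
        ∑ t, w t * y t ≤ ∑ t, w t * x' t) ∧
      interior' l u x' ⊂ interior' l u x := by
  simp only [interior', Finset.mem_filter, Finset.mem_univ, true_and] at hi hj
  set ε : ℝ := min (u i - x i) (x j - l j) with hε
  have hε1 : ε ≤ u i - x i := min_le_left _ _
  have hε2 : ε ≤ x j - l j := min_le_right _ _
  have hεpos : 0 < ε := lt_min (by linarith [hi.2]) (by linarith [hj.1])
  set x' : Fin n → ℝ := fun t => x t + (if t = i then ε else 0) - (if t = j then ε else 0)
    with hx'
  have hxi' : x' i = x i + ε := by simp [hx', hij]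
  have hxj' : x' j = x j - ε := by simp [hx', hij.symm]
  have hother : ∀ t, t ≠ i → t ≠ j → x' t = x t := by
    intro t h1 h2; simp [hx', h1, h2]
  have hfeas : ∀ t, l t ≤ x' t ∧ x' t ≤ u t := by
    intro t
    by_cases h1 : t = i
    · subst h1; rw [hxi']; constructor
      · linarith [(hx t).1]
      · linarith
    by_cases h2 : t = j
    · subst h2; rw [hxj']; constructor
      · linarith
      · linarith [(hx t).2]
    · rw [hother t h1 h2]; exact hx t
  have hsum : ∑ t, x' t = 0 := by
    simp only [hx']
    rw [Finset.sum_sub_distrib, Finset.sum_add_distrib]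
    simp [hs]
  have hobj : ∑ t, w t * x t ≤ ∑ t, w t * x' t := by
    have : ∀ t, w t * x' t = w t * x t + (if t = i then w t * ε else 0)
        - (if t = j then w t * ε else 0) := by
      intro t; simp only [hx', mul_add, mul_sub, mul_ite, mul_zero]
    simp only [this]
    rw [Finset.sum_sub_distrib, Finset.sum_add_distrib]
    simp only [Finset.sum_ite_eq', Finset.mem_univ, if_true]
    nlinarith
  have hmax' : ∀ y : Fin n → ℝ, (∀ t, l t ≤ y t ∧ y t ≤ u t) → (∑ t, y t = 0) →
      ∑ t, w t * y t ≤ ∑ t, w t * x' t := fun y h1 h2 => le_trans (hmax y h1 h2) hobj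
  refine ⟨x', hfeas, hsum, hmax', ?_⟩
  constructor
  · intro t ht
    simp only [interior', Finset.mem_filter, Finset.mem_univ, true_and] at ht ⊢
    by_cases h1 : t = i
    · subst h1; exact hi
    by_cases h2 : t = j
    · subst h2; exact hj
    · rwa [hother t h1 h2] at ht
  · intro hsub
    rcases min_cases (u i - x i) (x j - l j) with ⟨hc, _⟩ | ⟨hc, _⟩
    · have : i ∈ interior' l u x' := hsub (by
        simp only [interior', Finset.mem_filter, Finset.mem_univ, true_and]; exact hi)
      simp only [interior', Finset.mem_filter, Finset.mem_univ, true_and, hxi'] at this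
      rw [hε] at hxi'
      have : x i + ε < u i := this.2
      rw [hε, hc] at this
      linarith
    · have : j ∈ interior' l u x' := hsub (by
        simp only [interior', Finset.mem_filter, Finset.mem_univ, true_and]; exact hj)
      simp only [interior', Finset.mem_filter, Finset.mem_univ, true_and, hxj'] at this
      have : l j < x j - ε := this.1
      rw [hε, hc] at this
      linarith

private lemma reduce_lemma {n : ℕ} (w l u : Fin n → ℝ) :
    ∀ k : ℕ, ∀ x : Fin n → ℝ, (∀ t, l t ≤ x t ∧ x t ≤ u t) → (∑ t, x t = 0) →
    (∀ y : Fin n → ℝ, (∀ t, l t ≤ y t ∧ y t ≤ u t) → (∑ t, y t = 0) →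
        ∑ t, w t * y t ≤ ∑ t, w t * x t) →
    (interior' l u x).card ≤ k →
    ∃ x' : Fin n → ℝ, (∀ t, l t ≤ x' t ∧ x' t ≤ u t) ∧ (∑ t, x' t = 0) ∧
      (∀ y : Fin n → ℝ, (∀ t, l t ≤ y t ∧ y t ≤ u t) → (∑ t, y t = 0) →
        ∑ t, w t * y t ≤ ∑ t, w t * x' t) ∧
      (interior' l u x').card ≤ 1 := by
  intro k
  induction k with
  | zero =>
    intro x h1 h2 h3 hc
    exact ⟨x, h1, h2, h3, le_trans hc (by norm_num)⟩
  | succ k ih =>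
    intro x h1 h2 h3 hc
    by_cases hle : (interior' l u x).card ≤ 1
    · exact ⟨x, h1, h2, h3, hle⟩
    · push_neg at hle
      obtain ⟨i, hi, j, hj, hij⟩ := Finset.one_lt_card.mp hle
      rcases le_total (w j) (w i) with hw | hw
      · obtain ⟨x', a1, a2, a3, a4⟩ := step_lemma w l u x h1 h2 h3 i j hij hi hj hw
        exact ih x' a1 a2 a3 (by
          have := Finset.card_lt_card a4
          omega)
      · obtain ⟨x', a1, a2, a3, a4⟩ := step_lemma w l u x h1 h2 h3 j i (Ne.symm hij) hj hi hw
        exact ih x' a1 a2 a3 (by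
          have := Finset.card_lt_card a4
          omega)

private lemma feasible_nonempty {n : ℕ} (l u : Fin n → ℝ)
    (hlu : ∀ i, l i ≤ u i) (hl : ∑ i, l i ≤ 0) (hu : 0 ≤ ∑ i, u i) :
    ∃ x : Fin n → ℝ, (∀ i, l i ≤ x i ∧ x i ≤ u i) ∧ ∑ i, x i = 0 := by
  set D : ℝ := ∑ i, u i - ∑ i, l i with hD
  have hD0 : 0 ≤ D := by linarith
  by_cases h : D = 0
  · refine ⟨l, fun i => ⟨le_refl _, hlu i⟩, ?_⟩
    linarith
  · have hDpos : 0 < D := lt_of_le_of_ne hD0 (Ne.symm h)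
    set t : ℝ := (-∑ i, l i) / D with ht
    have ht0 : 0 ≤ t := div_nonneg (by linarith) hD0
    have ht1 : t ≤ 1 := by
      rw [ht, div_le_one hDpos]; linarith
    refine ⟨fun i => l i + t * (u i - l i), ?_, ?_⟩
    · intro i
      constructor
      · show l i ≤ l i + t * (u i - l i)
        nlinarith [hlu i]
      · show l i + t * (u i - l i) ≤ u i
        nlinarith [hlu i]
    · have : ∑ i, (l i + t * (u i - l i)) = ∑ i, l i + t * D := by
        rw [Finset.sum_add_distrib, ← Finset.mul_sum, hD, Finset.sum_sub_distrib]
      rw [this, ht, div_mul_cancel₀ _ h]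
      ring

/-- Greedy existence: if ∑ l ≤ 0 ≤ ∑ u, the feasible set is nonempty and there is
an optimal point with at most one coordinate strictly between its bounds. -/
theorem greedy_exists_optimal (n : ℕ) (w l u : Fin n → ℝ)
    (hlu : ∀ i, l i ≤ u i)
    (hl : ∑ i, l i ≤ 0) (hu : 0 ≤ ∑ i, u i) :
    ∃ x : Fin n → ℝ, (∀ i, l i ≤ x i ∧ x i ≤ u i) ∧ (∑ i, x i = 0) ∧
      (∀ y : Fin n → ℝ, (∀ i, l i ≤ y i ∧ y i ≤ u i) → (∑ i, y i = 0) →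
        ∑ t, w t * y t ≤ ∑ t, w t * x t) ∧
      ∃ s : Finset (Fin n), s.card ≤ 1 ∧ ∀ i ∉ s, x i = l i ∨ x i = u i := by
  -- feasible set
  set F : Set (Fin n → ℝ) := {x | (∀ i, l i ≤ x i ∧ x i ≤ u i) ∧ ∑ i, x i = 0} with hF
  obtain ⟨x0, hx0f, hx0s⟩ := feasible_nonempty l u hlu hl hu
  have hne : F.Nonempty := ⟨x0, hx0f, hx0s⟩
  -- compactness
  have hFeq : F = Set.Icc l u ∩ {x | ∑ i, x i = 0} := by
    ext x
    simp only [hF, Set.mem_setOf_eq, Set.mem_inter_iff, Set.mem_Icc, Pi.le_def]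
    constructor
    · rintro ⟨h1, h2⟩; exact ⟨⟨fun i => (h1 i).1, fun i => (h1 i).2⟩, h2⟩
    · rintro ⟨⟨h1, h2⟩, h3⟩; exact ⟨fun i => ⟨h1 i, h2 i⟩, h3⟩
  have hclosed : IsClosed {x : Fin n → ℝ | ∑ i, x i = 0} :=
    isClosed_eq (continuous_finset_sum _ fun i _ => continuous_apply i) continuous_const
  have hcomp : IsCompact F := by
    rw [hFeq]; exact isCompact_Icc.inter_right hclosed
  have hcont : Continuous fun x : Fin n → ℝ => ∑ t, w t * x t :=
    continuous_finset_sum _ fun t _ => continuous_const.mul (continuous_apply t)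
  obtain ⟨x, hxF, hxmax⟩ := hcomp.exists_isMaxOn hne hcont.continuousOn
  have hmax : ∀ y : Fin n → ℝ, (∀ t, l t ≤ y t ∧ y t ≤ u t) → (∑ t, y t = 0) →
      ∑ t, w t * y t ≤ ∑ t, w t * x t := by
    intro y h1 h2
    exact hxmax (Set.mem_setOf_eq ▸ ⟨h1, h2⟩)
  obtain ⟨x', a1, a2, a3, a4⟩ :=
    reduce_lemma w l u (interior' l u x).card x hxF.1 hxF.2 hmax (le_refl _)
  refine ⟨x', a1, a2, a3, interior' l u x', a4, ?_⟩
  intro i hi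
  simp only [interior', Finset.mem_filter, Finset.mem_univ, true_and, not_and_or,
    not_lt] at hi
  rcases hi with h | h
  · exact Or.inl (le_antisymm h (a1 i).1)
  · exact Or.inr (le_antisymm (a1 i).2 h)
end

section
/- For the symmetric-bounds feasible set F(α) with α ≥ 0, the maximum of ∑ w_i x_i over F(α) is nonnegative, and it is zero if and only if either α = 0 or the weights w are constant on the support {i : L_i > 0} (i.e., there do not exist i, j with L_i > 0, L_j > 0, and w_i ≠ w_j). -/
/-- Helper: with α > 0 and two support indices with w i > w j, there is a feasible
point with strictly positive objective. -/
lemma exists_pos_value (n : ℕ) (w L : Fin n → ℝ) (hL : ∀ i, 0 ≤ L i)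
    (α : ℝ) (hα : 0 < α) (i j : Fin n) (hLi : 0 < L i) (hLj : 0 < L j)
    (hw : w j < w i) :
    ∃ v ∈ {v : ℝ | ∃ x : Fin n → ℝ, (∀ i, -(α * L i) ≤ x i ∧ x i ≤ α * L i) ∧
        (∑ i, x i = 0) ∧ v = ∑ i, w i * x i}, 0 < v := by
  have hij : i ≠ j := fun h => absurd (h ▸ hw) (lt_irrefl _)
  set t : ℝ := α * min (L i) (L j) with ht
  have htpos : 0 < t := mul_pos hα (lt_min hLi hLj)
  have hti : t ≤ α * L i := mul_le_mul_of_nonneg_left (min_le_left _ _) hα.le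
  have htj : t ≤ α * L j := mul_le_mul_of_nonneg_left (min_le_right _ _) hα.le
  refine ⟨t * (w i - w j), ⟨fun k => if k = i then t else if k = j then -t else 0,
    ?_, ?_, ?_⟩, mul_pos htpos (sub_pos.mpr hw)⟩
  · intro k
    simp only
    split_ifs with hki hkj
    · subst hki
      exact ⟨by linarith [mul_nonneg hα.le (hL k)], hti⟩
    · subst hkj
      exact ⟨by linarith, by linarith [mul_nonneg hα.le (hL k)]⟩
    · exact ⟨by linarith [mul_nonneg hα.le (hL k)], mul_nonneg hα.le (hL k)⟩
  · have : ∀ k, (if k = i then t else if k = j then -t else 0)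
        = (if k = i then t else 0) + (if k = j then -t else 0) := by
      intro k
      by_cases hki : k = i
      · subst hki; simp [hij]
      · by_cases hkj : k = j <;> simp [hki, hkj, hij.symm]
    simp only [this, Finset.sum_add_distrib, Finset.sum_ite_eq', Finset.mem_univ,
      if_pos]
    ring
  · have : ∀ k, w k * (if k = i then t else if k = j then -t else 0)
        = (if k = i then w i * t else 0) + (if k = j then w j * (-t) else 0) := by
      intro k
      by_cases hki : k = i
      · subst hki; simp [hij]
      · by_cases hkj : k = j <;> simp [hki, hkj, hij.symm]
    simp only [this, Finset.sum_add_distrib, Finset.sum_ite_eq', Finset.mem_univ,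
      if_pos]
    ring

/-- The optimal objective over the symmetric-bounds feasible set is nonnegative,
and vanishes iff α = 0 or the weights are constant on the support of L. -/
theorem optimum_nonneg_and_zero_iff (n : ℕ) (w L : Fin n → ℝ) (hL : ∀ i, 0 ≤ L i)
    (α : ℝ) (hα : 0 ≤ α) (m : ℝ)
    (hm : IsGreatest
      {v : ℝ | ∃ x : Fin n → ℝ, (∀ i, -(α * L i) ≤ x i ∧ x i ≤ α * L i) ∧
        (∑ i, x i = 0) ∧ v = ∑ i, w i * x i} m) :
    0 ≤ m ∧ (m = 0 ↔ α = 0 ∨ ¬∃ i j, 0 < L i ∧ 0 < L j ∧ w i ≠ w j) := by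
  obtain ⟨hmem, hub⟩ := hm
  have h0 : (0:ℝ) ∈ {v : ℝ | ∃ x : Fin n → ℝ,
      (∀ i, -(α * L i) ≤ x i ∧ x i ≤ α * L i) ∧
      (∑ i, x i = 0) ∧ v = ∑ i, w i * x i} := by
    refine ⟨fun _ => 0, fun i => ?_, by simp, by simp⟩
    exact ⟨by simpa using neg_nonpos.mpr (mul_nonneg hα (hL i)),
      by simpa using mul_nonneg hα (hL i)⟩
  have hm0 : 0 ≤ m := hub h0
  refine ⟨hm0, ?_, ?_⟩
  · -- m = 0 → α = 0 ∨ constant weights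
    intro hmz
    by_contra hcon
    push_neg at hcon
    obtain ⟨hα0, i, j, hLi, hLj, hw⟩ := hcon
    have hαpos : 0 < α := lt_of_le_of_ne hα (Ne.symm hα0)
    rcases lt_or_gt_of_ne hw with h | h
    · obtain ⟨v, hv, hvpos⟩ := exists_pos_value n w L hL α hαpos j i hLj hLi h
      have := hub hv
      linarith
    · obtain ⟨v, hv, hvpos⟩ := exists_pos_value n w L hL α hαpos i j hLi hLj h
      have := hub hv
      linarith
  · -- α = 0 ∨ constant weights → m = 0
    rintro (rfl | h)
    · obtain ⟨x, hx, hsum, hv⟩ := hmem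
      have hx0 : ∀ i, x i = 0 := by
        intro i
        have h1 := (hx i).1
        have h2 := (hx i).2
        simp only [zero_mul, neg_zero] at h1 h2
        linarith
      simp [hv, hx0]
    · push_neg at h
      obtain ⟨x, hx, hsum, hv⟩ := hmem
      have hx0 : ∀ i, ¬ 0 < L i → x i = 0 := by
        intro i hLi
        have hLi0 : L i = 0 := le_antisymm (not_lt.mp hLi) (hL i)
        have h1 := (hx i).1
        have h2 := (hx i).2
        rw [hLi0] at h1 h2
        simp at h1 h2
        linarith
      by_cases hex : ∃ i0, 0 < L i0
      · obtain ⟨i0, hi0⟩ := hex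
        have key : ∀ i, w i * x i = (w i - w i0) * x i + w i0 * x i := by
          intro i; ring
        rw [hv]
        calc ∑ i, w i * x i
            = ∑ i, ((w i - w i0) * x i + w i0 * x i) := by
              exact Finset.sum_congr rfl (fun i _ => key i)
          _ = ∑ i, (w i - w i0) * x i + w i0 * ∑ i, x i := by
              rw [Finset.sum_add_distrib, Finset.mul_sum]
          _ = 0 := by
              rw [hsum, mul_zero, add_zero]
              apply Finset.sum_eq_zero
              intro i _
              by_cases hLi : 0 < L i
              · rw [h i i0 hLi hi0, sub_self, zero_mul]
              · rw [hx0 i hLi, mul_zero]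
      · push_neg at hex
        have : ∀ i, x i = 0 := fun i => hx0 i (not_lt.mpr (hex i))
        simp [hv, this]
end

section
/- (Uniqueness under distinct weights) Suppose the weights w_i are pairwise distinct. If x and y are both optimal solutions of maximizing ∑ w_i x_i over F = {x : l ≤ x ≤ u, ∑ x_i = 0} (nonempty), then x = y. -/
/-- Exchange argument: if `b` is feasible and optimal, `a` feasible, and there are
indices `i ≠ j` with `b i < a i`, `a j < b j`, and `w j < w i`, we get a contradiction. -/
lemma exchange_contra (n : ℕ) (w l u a b : Fin n → ℝ)
    (hb : ∀ i, l i ≤ b i ∧ b i ≤ u i) (hbsum : ∑ i, b i = 0)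
    (i j : Fin n) (hij : i ≠ j)
    (hi : b i < a i) (hj : a j < b j)
    (hai : a i ≤ u i) (haj : l j ≤ a j) (hwij : w j < w i)
    (hopt : ∀ z : Fin n → ℝ, (∀ t, l t ≤ z t ∧ z t ≤ u t) → (∑ t, z t = 0) →
      ∑ t, w t * z t ≤ ∑ t, w t * b t) : False := by
  set ε : ℝ := min (a i - b i) (b j - a j) with hε
  have hεpos : 0 < ε := lt_min (by linarith) (by linarith)
  have hε1 : ε ≤ a i - b i := min_le_left _ _
  have hε2 : ε ≤ b j - a j := min_le_right _ _
  set z : Fin n → ℝ := fun t => b t + (if t = i then ε else 0) - (if t = j then ε else 0)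
    with hz
  have hfeas : ∀ t, l t ≤ z t ∧ z t ≤ u t := by
    intro t
    by_cases hti : t = i
    · subst hti
      have := hb t
      simp [hz, hij]
      constructor <;> linarith
    · by_cases htj : t = j
      · subst htj
        have := hb t
        simp [hz, hti]
        constructor <;> linarith
      · have := hb t
        simp [hz, hti, htj]
        exact this
  have hsum : ∑ t, z t = 0 := by
    simp [hz, Finset.sum_add_distrib, Finset.sum_sub_distrib, hbsum]
  have hval : ∑ t, w t * z t = ∑ t, w t * b t + w i * ε - w j * ε := by
    simp [hz, mul_add, mul_sub, mul_ite, mul_zero,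
      Finset.sum_add_distrib, Finset.sum_sub_distrib]
  have := hopt z hfeas hsum
  rw [hval] at this
  nlinarith

/-- If `a` and `b` are both optimal and `b k < a k` for some `k`, contradiction. -/
lemma no_strict_gt (n : ℕ) (w l u a b : Fin n → ℝ)
    (hw : ∀ i j, i ≠ j → w i ≠ w j)
    (ha : ∀ i, l i ≤ a i ∧ a i ≤ u i) (hasum : ∑ i, a i = 0)
    (hb : ∀ i, l i ≤ b i ∧ b i ≤ u i) (hbsum : ∑ i, b i = 0)
    (haopt : ∀ z : Fin n → ℝ, (∀ t, l t ≤ z t ∧ z t ≤ u t) → (∑ t, z t = 0) →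
      ∑ t, w t * z t ≤ ∑ t, w t * a t)
    (hbopt : ∀ z : Fin n → ℝ, (∀ t, l t ≤ z t ∧ z t ≤ u t) → (∑ t, z t = 0) →
      ∑ t, w t * z t ≤ ∑ t, w t * b t)
    (k : Fin n) (hk : b k < a k) : False := by
  -- find j with a j < b j
  have hj : ∃ j, a j < b j := by
    by_contra h
    push_neg at h
    have : (0:ℝ) < ∑ t, (a t - b t) := by
      apply Finset.sum_pos' (fun t _ => by linarith [h t]) ⟨k, Finset.mem_univ k, by linarith⟩
    rw [Finset.sum_sub_distrib, hasum, hbsum] at this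
    linarith
  obtain ⟨j, hjlt⟩ := hj
  have hkj : k ≠ j := fun h => by subst h; linarith
  rcases lt_trichotomy (w k) (w j) with h | h | h
  · exact exchange_contra n w l u b a ha hasum j k (Ne.symm hkj) hjlt hk
      (hb j).2 (hb k).1 h haopt
  · exact hw k j hkj h
  · exact exchange_contra n w l u a b hb hbsum k j hkj hk hjlt
      (ha k).2 (ha j).1 h hbopt

/-- Uniqueness of the optimum under pairwise distinct weights. -/
theorem optimum_unique_of_distinct_weights (n : ℕ) (w l u x y : Fin n → ℝ)
    (hw : ∀ i j, i ≠ j → w i ≠ w j)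
    (hlu : ∀ i, l i ≤ u i)
    (hx : ∀ i, l i ≤ x i ∧ x i ≤ u i) (hxsum : ∑ i, x i = 0)
    (hy : ∀ i, l i ≤ y i ∧ y i ≤ u i) (hysum : ∑ i, y i = 0)
    (hxopt : ∀ z : Fin n → ℝ, (∀ i, l i ≤ z i ∧ z i ≤ u i) → (∑ i, z i = 0) →
      ∑ t, w t * z t ≤ ∑ t, w t * x t)
    (hyopt : ∀ z : Fin n → ℝ, (∀ i, l i ≤ z i ∧ z i ≤ u i) → (∑ i, z i = 0) →
      ∑ t, w t * z t ≤ ∑ t, w t * y t) :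
    x = y := by
  funext k
  by_contra h
  rcases lt_or_gt_of_ne h with hlt | hgt
  · exact no_strict_gt n w l u y x hw hy hysum hx hxsum hyopt hxopt k hlt
  · exact no_strict_gt n w l u x y hw hx hxsum hy hysum hxopt hyopt k hgt
end

section
/- (Complementary slackness form) Let x be optimal for max ∑ w_i x_i over F = {x : l ≤ x ≤ u, ∑ x_i = 0} (nonempty). Then there exists λ ∈ ℝ such that for every index i: if w_i > λ then x_i = u_i, and if w_i < λ then x_i = l_i. -/
lemma exchange_aux (n : ℕ) (w l u x : Fin n → ℝ)
    (hx : ∀ i, l i ≤ x i ∧ x i ≤ u i) (hxsum : ∑ i, x i = 0)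
    (hopt : ∀ y : Fin n → ℝ, (∀ i, l i ≤ y i ∧ y i ≤ u i) → (∑ i, y i = 0) →
      ∑ t, w t * y t ≤ ∑ t, w t * x t)
    (i j : Fin n) (hij : i ≠ j) (hi : x i < u i) (hj : l j < x j) :
    w i ≤ w j := by
  set ε := min (u i - x i) (x j - l j) with hεdef
  have hε : 0 < ε := lt_min (by linarith) (by linarith)
  have hε1 : ε ≤ u i - x i := min_le_left _ _
  have hε2 : ε ≤ x j - l j := min_le_right _ _
  set y : Fin n → ℝ := fun t =>
    x t + (if t = i then ε else 0) - (if t = j then ε else 0) with hy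
  have hfeas : ∀ t, l t ≤ y t ∧ y t ≤ u t := by
    intro t
    by_cases hti : t = i
    · subst hti
      simp only [hy, if_pos rfl, if_neg hij, if_true]
      norm_num
      constructor
      · have := (hx t).1; linarith
      · linarith
    · by_cases htj : t = j
      · subst htj
        simp only [hy, if_neg hti, if_pos rfl, if_true]
        norm_num
        constructor
        · linarith
        · have := (hx t).2; linarith
      · simp only [hy, if_neg hti, if_neg htj]
        have := hx t
        constructor <;> linarith [this.1, this.2]
  have hsum : ∑ t, y t = 0 := by
    simp only [hy]
    rw [Finset.sum_sub_distrib, Finset.sum_add_distrib,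
      Finset.sum_ite_eq' Finset.univ i (fun _ => ε),
      Finset.sum_ite_eq' Finset.univ j (fun _ => ε)]
    simp [hxsum]
  have hobj := hopt y hfeas hsum
  have hval : ∑ t, w t * y t = ∑ t, w t * x t + w i * ε - w j * ε := by
    simp only [hy, mul_sub, mul_add, mul_ite, mul_zero]
    rw [Finset.sum_sub_distrib, Finset.sum_add_distrib,
      Finset.sum_ite_eq' Finset.univ i (fun t => w t * ε),
      Finset.sum_ite_eq' Finset.univ j (fun t => w t * ε)]
    simp
  rw [hval] at hobj
  have : w i * ε ≤ w j * ε := by linarith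
  exact le_of_mul_le_mul_right this hε

/-- Complementary slackness: an optimal x admits a threshold λ with
w i > λ → x i = u i and w i < λ → x i = l i. -/
theorem complementary_slackness (n : ℕ) (w l u x : Fin n → ℝ)
    (hlu : ∀ i, l i ≤ u i)
    (hx : ∀ i, l i ≤ x i ∧ x i ≤ u i) (hxsum : ∑ i, x i = 0)
    (hopt : ∀ y : Fin n → ℝ, (∀ i, l i ≤ y i ∧ y i ≤ u i) → (∑ i, y i = 0) →
      ∑ t, w t * y t ≤ ∑ t, w t * x t) :
    ∃ lam : ℝ, ∀ i, (w i > lam → x i = u i) ∧ (w i < lam → x i = l i) := by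
  classical
  set S : Finset (Fin n) := Finset.univ.filter (fun i => x i < u i) with hS
  by_cases hSne : S.Nonempty
  · obtain ⟨k, hkS, hkmax⟩ := S.exists_max_image w hSne
    have hkS' : x k < u k := by simpa [hS] using hkS
    refine ⟨w k, fun i => ⟨?_, ?_⟩⟩
    · intro hwi
      by_contra h
      have hiS : i ∈ S := by
        simp [hS]
        exact lt_of_le_of_ne (hx i).2 h
      exact absurd (hkmax i hiS) (not_le.mpr hwi)
    · intro hwi
      by_contra h
      have hli : l i < x i := lt_of_le_of_ne (hx i).1 (Ne.symm h)
      have hik : k ≠ i := by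
        intro he; subst he; exact lt_irrefl _ hwi
      have := exchange_aux n w l u x hx hxsum hopt k i hik hkS' hli
      linarith
  · -- x i = u i for all i; pick lam below all w i
    have hall : ∀ i, x i = u i := by
      intro i
      by_contra h
      exact hSne ⟨i, by simp [hS]; exact lt_of_le_of_ne (hx i).2 h⟩
    by_cases hn : (Finset.univ : Finset (Fin n)).Nonempty
    · obtain ⟨m, _, hm⟩ := Finset.exists_min_image Finset.univ w hn
      refine ⟨w m - 1, fun i => ⟨fun _ => hall i, fun hlt => ?_⟩⟩
      have := hm i (Finset.mem_univ i)
      linarith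
    · exact ⟨0, fun i => absurd (Finset.mem_univ i) (fun h => hn ⟨i, h⟩)⟩
end
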